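/- For every real c with 0 < c < 1/2 and every real ν, the integral (1/√(2π))·∫_ℝ e^{−h²/2}·e^{c·max(h−ν,0)²} dh equals (1/2)·( e^{c·ν²/(1−2c)}/√(1−2c) · erfc( ν/(√2·√(1−2c)) ) + erf(ν/√2) + 1 ). -/
import Mathlib


open Real MeasureTheory
open Set

lemma integrable_gauss : Integrable (fun t : ℝ => Real.exp (-t ^ 2)) := by
  have := integrable_exp_neg_mul_sq (by norm_num : (0:ℝ) < 1)
  simpa using this

lemma shiftIoi (g : ℝ → ℝ) (a d : ℝ) :
    ∫ x in Ioi a, g (x + d) = ∫ x in Ioi (a + d), g x := by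
  rw [← integral_indicator measurableSet_Ioi, ← integral_indicator measurableSet_Ioi,
    ← integral_add_right_eq_self (Set.indicator (Ioi (a + d)) g) d]
  congr 1
  ext x
  simp only [Set.indicator, mem_Ioi]
  have : a < x ↔ a + d < x + d := by constructor <;> intro <;> linarith
  by_cases h : a < x
  · simp [h, this.mp h]
  · simp [h, fun hh => h (this.mpr hh)]

lemma gauss_Ioi (x : ℝ) : ∫ t in Ioi x, Real.exp (-t ^ 2)
    = Real.sqrt Real.pi - ((Real.sqrt Real.pi)/2 + ∫ t in (0:ℝ)..x, Real.exp (-t ^ 2)) := by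
  have hInt := integrable_gauss
  have h1 : (∫ t in Iic x, Real.exp (-t^2)) + ∫ t in Ioi x, Real.exp (-t^2)
      = ∫ t : ℝ, Real.exp (-t^2) :=
    intervalIntegral.integral_Iic_add_Ioi hInt.integrableOn hInt.integrableOn
  have h2 : (∫ t in Iic x, Real.exp (-t^2)) - ∫ t in Iic (0:ℝ), Real.exp (-t^2)
      = ∫ t in (0:ℝ)..x, Real.exp (-t^2) :=
    intervalIntegral.integral_Iic_sub_Iic hInt.integrableOn hInt.integrableOn
  have hfull : (∫ t : ℝ, Real.exp (-t^2)) = Real.sqrt Real.pi := by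
    have := integral_gaussian 1
    simpa using this
  have hIoi0 : (∫ t in Ioi (0:ℝ), Real.exp (-t^2)) = Real.sqrt Real.pi / 2 := by
    have := integral_gaussian_Ioi 1
    simpa using this
  have h3 : (∫ t in Iic (0:ℝ), Real.exp (-t^2)) + ∫ t in Ioi (0:ℝ), Real.exp (-t^2)
      = ∫ t : ℝ, Real.exp (-t^2) :=
    intervalIntegral.integral_Iic_add_Ioi hInt.integrableOn hInt.integrableOn
  rw [hfull] at h1 h3
  rw [hIoi0] at h3
  linarith

/-- erf(x) = (2/√π)·∫_0^x e^{−t²} dt -/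
noncomputable def erf (x : ℝ) : ℝ := (2 / Real.sqrt Real.pi) * ∫ t in (0:ℝ)..x, Real.exp (-t ^ 2)

/-- erfc(x) = (2/√π)·∫_x^∞ e^{−t²} dt -/
noncomputable def erfc (x : ℝ) : ℝ := (2 / Real.sqrt Real.pi) * ∫ t in Set.Ioi x, Real.exp (-t ^ 2)

theorem stmt11 (c ν : ℝ) (hc0 : 0 < c) (hc : c < 1 / 2) :
    (1 / Real.sqrt (2 * Real.pi)) *
      ∫ h : ℝ, Real.exp (-h ^ 2 / 2) * Real.exp (c * (max (h - ν) 0) ^ 2)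
    = (1 / 2) * (Real.exp (c * ν ^ 2 / (1 - 2 * c)) / Real.sqrt (1 - 2 * c)
        * erfc (ν / (Real.sqrt 2 * Real.sqrt (1 - 2 * c)))
      + erf (ν / Real.sqrt 2) + 1) := by
  have hd : (0:ℝ) < 1 - 2 * c := by linarith
  set a : ℝ := (1 - 2 * c) / 2 with ha_def
  have ha : 0 < a := by simp only [ha_def]; linarith
  set m : ℝ := -(2 * c * ν) / (1 - 2 * c) with hm_def
  set K : ℝ := c * ν ^ 2 / (1 - 2 * c) with hK_def
  set F : ℝ → ℝ := fun h => Real.exp (-h ^ 2 / 2) * Real.exp (c * (max (h - ν) 0) ^ 2) with hF_def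
  -- pointwise identities
  have hFIic : ∀ h ∈ Iic ν, F h = Real.exp (-(1/2) * h ^ 2) := by
    intro h hh
    simp only [hF_def, mem_Iic] at hh ⊢
    rw [max_eq_right (by linarith : h - ν ≤ 0)]
    norm_num
    ring_nf
  have hFIoi : ∀ h ∈ Ioi ν, F h = Real.exp K * Real.exp (-a * (h - m) ^ 2) := by
    intro h hh
    simp only [hF_def, mem_Ioi] at hh ⊢
    rw [max_eq_left (by linarith : (0:ℝ) ≤ h - ν), ← Real.exp_add, ← Real.exp_add]
    congr 1
    simp only [hK_def, hm_def, ha_def]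
    field_simp
    ring
  -- integrability
  have hI1 : IntegrableOn F (Iic ν) := by
    refine ((integrable_exp_neg_mul_sq (by norm_num : (0:ℝ) < 1/2)).integrableOn).congr_fun
      ?_ measurableSet_Iic
    intro h hh; exact (hFIic h hh).symm
  have hI2 : IntegrableOn F (Ioi ν) := by
    refine ((((integrable_exp_neg_mul_sq ha).comp_sub_right m).const_mul
      (Real.exp K)).integrableOn).congr_fun ?_ measurableSet_Ioi
    intro h hh; exact (hFIoi h hh).symm
  have hsplit : (∫ h : ℝ, F h) = (∫ h in Iic ν, F h) + ∫ h in Ioi ν, F h :=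
    (intervalIntegral.integral_Iic_add_Ioi hI1 hI2).symm
  -- abbreviations
  have hs2 : (0:ℝ) < Real.sqrt 2 := Real.sqrt_pos.mpr (by norm_num)
  have hsπ : (0:ℝ) < Real.sqrt Real.pi := Real.sqrt_pos.mpr Real.pi_pos
  have hsa : (0:ℝ) < Real.sqrt a := Real.sqrt_pos.mpr ha
  have hs2sq : Real.sqrt 2 * Real.sqrt 2 = 2 := Real.mul_self_sqrt (by norm_num)
  have hsasq : Real.sqrt a * Real.sqrt a = a := Real.mul_self_sqrt ha.le
  have hsd : Real.sqrt (1 - 2 * c) = Real.sqrt 2 * Real.sqrt a := by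
    rw [← Real.sqrt_mul (by norm_num : (0:ℝ) ≤ 2)]
    congr 1; simp only [ha_def]; ring
  have hs2π : Real.sqrt (2 * Real.pi) = Real.sqrt 2 * Real.sqrt Real.pi :=
    Real.sqrt_mul (by norm_num) _
  -- left piece
  have hgauss2 : ∀ h : ℝ, Real.exp (-(1/2) * h ^ 2) = Real.exp (-((Real.sqrt 2)⁻¹ * h) ^ 2) := by
    intro h; congr 1
    rw [mul_pow, inv_pow, Real.sq_sqrt (by norm_num : (0:ℝ) ≤ 2)]; ring
  have hIoiHalf : (∫ h in Ioi ν, Real.exp (-(1/2) * h ^ 2))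
      = Real.sqrt 2 * ∫ t in Ioi (ν / Real.sqrt 2), Real.exp (-t ^ 2) := by
    simp_rw [hgauss2]
    rw [integral_comp_mul_left_Ioi (fun t => Real.exp (-t ^ 2)) ν (inv_pos.mpr hs2)]
    rw [inv_inv, smul_eq_mul, inv_mul_eq_div]
  have hfull2 : (∫ h : ℝ, Real.exp (-(1/2) * h ^ 2)) = Real.sqrt (2 * Real.pi) := by
    rw [integral_gaussian]
    congr 1; rw [div_div_eq_mul_div, div_one]; ring
  have hIic_half : (∫ h in Iic ν, Real.exp (-(1/2) * h ^ 2))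
      = Real.sqrt (2 * Real.pi)
        - Real.sqrt 2 * ∫ t in Ioi (ν / Real.sqrt 2), Real.exp (-t ^ 2) := by
    have := intervalIntegral.integral_Iic_add_Ioi (b := ν)
      ((integrable_exp_neg_mul_sq (by norm_num : (0:ℝ) < 1/2)).integrableOn)
      ((integrable_exp_neg_mul_sq (by norm_num : (0:ℝ) < 1/2)).integrableOn)
    rw [hfull2] at this
    rw [hIoiHalf] at this
    linarith
  have hLeft : (∫ h in Iic ν, F h)
      = Real.sqrt (2 * Real.pi)
        - Real.sqrt 2 * ∫ t in Ioi (ν / Real.sqrt 2), Real.exp (-t ^ 2) := by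
    rw [setIntegral_congr_fun measurableSet_Iic hFIic, hIic_half]
  -- right piece
  have hgaussA : ∀ u : ℝ, Real.exp (-a * u ^ 2) = Real.exp (-(Real.sqrt a * u) ^ 2) := by
    intro u; congr 1
    rw [mul_pow, Real.sq_sqrt ha.le]; ring
  have harg : Real.sqrt a * (ν + -m) = ν / (Real.sqrt 2 * Real.sqrt (1 - 2 * c)) := by
    rw [hsd]
    have hνm : ν + -m = ν / (2 * a) := by
      simp only [hm_def, ha_def]
      field_simp
      ring
    rw [hνm]
    rw [eq_div_iff (by positivity : Real.sqrt 2 * (Real.sqrt 2 * Real.sqrt a) ≠ 0)]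
    field_simp
    linear_combination ν * Real.sqrt a * Real.sqrt a * hs2sq + 2 * ν * hsasq
  have hRight : (∫ h in Ioi ν, F h)
      = Real.exp K * ((Real.sqrt a)⁻¹
        * ∫ t in Ioi (ν / (Real.sqrt 2 * Real.sqrt (1 - 2 * c))), Real.exp (-t ^ 2)) := by
    rw [setIntegral_congr_fun measurableSet_Ioi hFIoi, integral_const_mul]
    congr 1
    have : ∀ h : ℝ, Real.exp (-a * (h - m) ^ 2)
        = (fun u => Real.exp (-a * u ^ 2)) (h + -m) := by
      intro h; simp [sub_eq_add_neg]
    simp_rw [this]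
    rw [shiftIoi (fun u => Real.exp (-a * u ^ 2)) ν (-m)]
    simp_rw [hgaussA]
    rw [integral_comp_mul_left_Ioi (fun t => Real.exp (-t ^ 2)) (ν + -m) hsa]
    rw [smul_eq_mul, harg]
  -- assemble
  rw [show (∫ h : ℝ, Real.exp (-h ^ 2 / 2) * Real.exp (c * (max (h - ν) 0) ^ 2))
      = ∫ h : ℝ, F h from rfl, hsplit, hLeft, hRight]
  set E1 : ℝ := ∫ t in Ioi (ν / Real.sqrt 2), Real.exp (-t ^ 2) with hE1
  set E2 : ℝ := ∫ t in Ioi (ν / (Real.sqrt 2 * Real.sqrt (1 - 2 * c))), Real.exp (-t ^ 2) with hE2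
  have herf : erf (ν / Real.sqrt 2) = 1 - (2 / Real.sqrt Real.pi) * E1 := by
    rw [erf, hE1, gauss_Ioi]
    field_simp
    ring
  have herfc : erfc (ν / (Real.sqrt 2 * Real.sqrt (1 - 2 * c)))
      = (2 / Real.sqrt Real.pi) * E2 := rfl
  rw [herf, herfc, hs2π, hsd, hK_def]
  have heK : (0:ℝ) < Real.exp (c * ν ^ 2 / (1 - 2 * c)) := Real.exp_pos _
  field_simp
  ring
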